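/- Let C ⊆ X be closed. Then: (1) for every r > 0, f̲^{U,Λ}(C,r) ≤ σ_abs(ζ_C^{U,Λ}(·;r)); (2) f̲^{U,Λ}(C) ≤ liminf_{r↘0} σ_abs(ζ_C^{U,Λ}(·;r)). -/

import Mathlib

open MeasureTheory Filter Topology Metric Set
open scoped ENNReal NNReal Classical

namespace Multifractal

/-- Infinite strings over `{1,…,N}`. -/
abbrev Seq (N : ℕ) := ℕ → Fin N

/-- Finite strings over `{1,…,N}` (the empty string is excluded where appropriate). -/
abbrev Word (N : ℕ) := List (Fin N)

variable {N : ℕ}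

/-- The shift map on `Σ^ℕ`. -/
def shift : Seq N → Seq N := fun x n => x (n + 1)

/-- The cylinder `[w]` generated by a finite string `w`. -/
def cylinder (w : Word N) : Set (Seq N) :=
  {x : Seq N | ∀ (k : ℕ) (h : k < w.length), x k = w.get ⟨k, h⟩}

/-- Birkhoff sum `∑_{k<n} φ(S^k x)`. -/
noncomputable def birkhoff (φ : Seq N → ℝ) (n : ℕ) (x : Seq N) : ℝ :=
  ∑ k ∈ Finset.range n, φ (shift^[k] x)

/-- `s_w = sup_{x ∈ [w]} exp (∑_{k<|w|} Λ(S^k x))`. -/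
noncomputable def sWord (Λ : Seq N → ℝ) (w : Word N) : ℝ :=
  sSup ((fun x => Real.exp (birkhoff Λ w.length x)) '' cylinder w)

/-- Bounded distortion (condition (C3)): `exp(S_nΛ(i))/exp(S_nΛ(j)) ∈ [1/c, c]`
whenever `i|n = j|n`.  (By symmetry in `i,j` the one-sided bound suffices.) -/
def BddDistortion (Λ : Seq N → ℝ) (c : ℝ) : Prop :=
  ∀ (n : ℕ) (i j : Seq N), (∀ k < n, i k = j k) →
    Real.exp (birkhoff Λ n i) ≤ c * Real.exp (birkhoff Λ n j)

/-- The empirical measure `L_n x = (1/n) ∑_{k<n} δ_{S^k x}` (junk value `δ_x` for `n = 0`). -/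
noncomputable def emp (n : ℕ) (x : Seq N) : ProbabilityMeasure (Seq N) :=
  if h : n = 0 then ⟨Measure.dirac x, inferInstance⟩
  else
    ⟨(n : ℝ≥0∞)⁻¹ • ∑ k ∈ Finset.range n, Measure.dirac (shift^[k] x), by
      constructor
      simp only [Measure.smul_apply, Measure.coe_finset_sum, Finset.sum_apply, measure_univ,
        Finset.sum_const, Finset.card_range, nsmul_eq_mul, mul_one, smul_eq_mul]
      exact ENNReal.inv_mul_cancel (Nat.cast_ne_zero.mpr h) (ENNReal.natCast_ne_top n)⟩

/-- Shift invariance of a probability measure. -/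
def Invariant (μ : ProbabilityMeasure (Seq N)) : Prop :=
  μ.toMeasure.map shift = μ.toMeasure

/-- `n`-th partition entropy `-∑_{|w|=n} μ[w] log μ[w]`. -/
noncomputable def entropyAux (μ : ProbabilityMeasure (Seq N)) (n : ℕ) : ℝ :=
  -∑ w : Fin n → Fin N,
      (μ (cylinder (List.ofFn w)) : ℝ) * Real.log (μ (cylinder (List.ofFn w)) : ℝ)

/-- The Kolmogorov–Sinai entropy of a (shift-invariant) measure on the full shift,
via the generating partition into cylinders. -/
noncomputable def entropy (μ : ProbabilityMeasure (Seq N)) : ℝ :=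
  Filter.atTop.liminf fun n => entropyAux μ n / n

/-- Abscissa of convergence of the "zeta-function" `s ↦ ∑ a_w^s`, the sum ranging over the
nonempty finite strings satisfying `P`; values in `EReal` (so `⊤` if never summable and `⊥`
if always summable, e.g. for an empty index set). -/
noncomputable def sigmaAbs (a : Word N → ℝ) (P : Word N → Prop) : EReal :=
  sInf ((fun t : ℝ => (t : EReal)) ''
    {t : ℝ | Summable fun w : {w : Word N // w ≠ [] ∧ P w} => a w.1 ^ t})

variable {X : Type*}

/-- `U(L_{|w|}[w]) ⊆ B`. -/
def inTarget (U : ProbabilityMeasure (Seq N) → X) (B : Set X) (w : Word N) : Prop :=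
  ∀ x ∈ cylinder w, U (emp w.length x) ∈ B

/-- The closed `r`-neighbourhood `B(C,r)` of a set. -/
def cball [MetricSpace X] (C : Set X) (r : ℝ) : Set X := {x | infDist x C ≤ r}

/-- The counting function `N_δ^{U,Λ}(C,r)`: number of strings `w` with `s_w ≈ δ` and
`U(L_{|w|}[w]) ⊆ B(C,r)`. -/
noncomputable def Ncount [MetricSpace X] (Λ : Seq N → ℝ) (U : ProbabilityMeasure (Seq N) → X)
    (C : Set X) (r δ : ℝ) : ℕ :=
  Set.ncard {w : Word N | w ≠ [] ∧ sWord Λ w ≤ δ ∧ δ < sWord Λ w.dropLast ∧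
    inTarget U (cball C r) w}

/-- `log m / (-log δ)`, read as `-∞` when `m = 0`. -/
noncomputable def ratioE (m : ℕ) (δ : ℝ) : EReal :=
  if m = 0 then ⊥ else (((Real.log m) / (-Real.log δ) : ℝ) : EReal)

/-- The `r`-approximate lower coarse multifractal spectrum `f̲^{U,Λ}(C,r)`. -/
noncomputable def coarseLowerR [MetricSpace X] (Λ : Seq N → ℝ)
    (U : ProbabilityMeasure (Seq N) → X) (C : Set X) (r : ℝ) : EReal :=
  Filter.liminf (fun δ : ℝ => ratioE (Ncount Λ U C r δ) δ) (𝓝[>] (0 : ℝ))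

/-- The lower coarse multifractal spectrum `f̲^{U,Λ}(C) = lim_{r↘0} f̲^{U,Λ}(C,r)`;
since `f̲^{U,Λ}(C,r)` is nondecreasing in `r`, the limit is the infimum over `r > 0`. -/
noncomputable def coarseLower [MetricSpace X] (Λ : Seq N → ℝ)
    (U : ProbabilityMeasure (Seq N) → X) (C : Set X) : EReal :=
  ⨅ (r : ℝ) (_ : 0 < r), coarseLowerR Λ U C r

/-- The variational quantity `sup { -h(μ)/∫Λ dμ : μ shift-invariant, Uμ ∈ C }`. -/
noncomputable def varSup (Λ : Seq N → ℝ) (U : ProbabilityMeasure (Seq N) → X)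
    (C : Set X) : EReal :=
  sSup {x : EReal | ∃ μ : ProbabilityMeasure (Seq N), Invariant μ ∧ U μ ∈ C ∧
    x = ((-(entropy μ) / ∫ y, Λ y ∂μ.toMeasure : ℝ) : EReal)}

end Multifractal

namespace Multifractal

section Aux

variable {N : ℕ} {Λ : Seq N → ℝ} {cmin cmax : ℝ}

lemma cylinder_nonempty (hN : 0 < N) (w : Word N) : (cylinder w).Nonempty := by
  refine ⟨fun k => if h : k < w.length then w.get ⟨k, h⟩ else ⟨0, hN⟩, fun k h => ?_⟩
  simp [h]

lemma cylinder_subset_dropLast (w : Word N) : cylinder w ⊆ cylinder w.dropLast := by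
  intro x hx k hk
  have hk' : k < w.length := lt_of_lt_of_le hk (by rw [List.length_dropLast]; omega)
  have := hx k hk'
  simpa [List.get_eq_getElem, List.getElem_dropLast] using this

lemma birkhoff_le (hΛ : ∀ x, Λ x ∈ Set.Icc cmin cmax) (n : ℕ) (x : Seq N) :
    birkhoff Λ n x ≤ n * cmax := by
  have : birkhoff Λ n x ≤ ∑ k ∈ Finset.range n, cmax :=
    Finset.sum_le_sum fun k _ => (hΛ _).2
  simpa using this

lemma le_birkhoff (hΛ : ∀ x, Λ x ∈ Set.Icc cmin cmax) (n : ℕ) (x : Seq N) :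
    (n : ℝ) * cmin ≤ birkhoff Λ n x := by
  have : ∑ k ∈ Finset.range n, cmin ≤ birkhoff Λ n x :=
    Finset.sum_le_sum fun k _ => (hΛ _).1
  simpa using this

lemma bddAbove_expBirkhoff (hΛ : ∀ x, Λ x ∈ Set.Icc cmin cmax) (w : Word N) :
    BddAbove ((fun x => Real.exp (birkhoff Λ w.length x)) '' cylinder w) := by
  refine ⟨Real.exp (w.length * cmax), ?_⟩
  rintro _ ⟨x, -, rfl⟩
  exact Real.exp_le_exp.2 (birkhoff_le hΛ _ _)

lemma sWord_le (hΛ : ∀ x, Λ x ∈ Set.Icc cmin cmax) (w : Word N) :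
    sWord Λ w ≤ Real.exp (w.length * cmax) :=
  Real.sSup_le (by rintro _ ⟨x, -, rfl⟩; exact Real.exp_le_exp.2 (birkhoff_le hΛ _ _))
    (Real.exp_pos _).le

lemma le_sWord (hN : 0 < N) (hΛ : ∀ x, Λ x ∈ Set.Icc cmin cmax) (w : Word N) :
    Real.exp (w.length * cmin) ≤ sWord Λ w := by
  obtain ⟨x, hx⟩ := cylinder_nonempty hN w
  calc Real.exp (w.length * cmin) ≤ Real.exp (birkhoff Λ w.length x) :=
        Real.exp_le_exp.2 (le_birkhoff hΛ _ _)
    _ ≤ sWord Λ w := le_csSup (bddAbove_expBirkhoff hΛ w) ⟨x, hx, rfl⟩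

lemma sWord_pos (hN : 0 < N) (hΛ : ∀ x, Λ x ∈ Set.Icc cmin cmax) (w : Word N) :
    0 < sWord Λ w :=
  lt_of_lt_of_le (Real.exp_pos _) (le_sWord hN hΛ w)

lemma sWord_dropLast_le (hN : 0 < N) (hΛ : ∀ x, Λ x ∈ Set.Icc cmin cmax)
    {c : ℝ} (hc : 1 ≤ c) (hdist : BddDistortion Λ c) {w : Word N} (hw : w ≠ []) :
    sWord Λ w.dropLast ≤ c * Real.exp (-cmin) * sWord Λ w := by
  obtain ⟨x, hx⟩ := cylinder_nonempty hN w
  have hxm : x ∈ cylinder w.dropLast := cylinder_subset_dropLast w hx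
  have hc0 : (0:ℝ) < c := lt_of_lt_of_le one_pos hc
  have hsw : 0 < sWord Λ w := sWord_pos hN hΛ w
  apply Real.sSup_le
  · rintro _ ⟨y, hy, rfl⟩
    have hn : 1 ≤ w.length := List.length_pos_iff.2 hw
    have hlen : w.dropLast.length = w.length - 1 := List.length_dropLast
    have hagree : ∀ k < w.length - 1, y k = x k := by
      intro k hk
      have hk' : k < w.dropLast.length := by omega
      rw [hy k hk', hxm k hk']
    have h1 : Real.exp (birkhoff Λ (w.length - 1) y) ≤
        c * Real.exp (birkhoff Λ (w.length - 1) x) := hdist _ y x hagree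
    have hsum : birkhoff Λ w.length x = birkhoff Λ (w.length - 1) x +
        Λ (shift^[w.length - 1] x) := by
      rw [birkhoff, birkhoff]
      have : w.length = (w.length - 1) + 1 := by omega
      rw [this, Finset.sum_range_succ]
      simp
    have h2 : Real.exp (birkhoff Λ (w.length - 1) x) ≤
        Real.exp (-cmin) * Real.exp (birkhoff Λ w.length x) := by
      rw [← Real.exp_add]
      apply Real.exp_le_exp.2
      have := (hΛ (shift^[w.length - 1] x)).1
      rw [hsum]; linarith
    have h3 : Real.exp (birkhoff Λ w.length x) ≤ sWord Λ w :=
      le_csSup (bddAbove_expBirkhoff hΛ w) ⟨x, hx, rfl⟩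
    rw [hlen]
    calc Real.exp (birkhoff Λ (w.length - 1) y)
        ≤ c * Real.exp (birkhoff Λ (w.length - 1) x) := h1
      _ ≤ c * (Real.exp (-cmin) * Real.exp (birkhoff Λ w.length x)) := by
          exact mul_le_mul_of_nonneg_left h2 hc0.le
      _ ≤ c * (Real.exp (-cmin) * sWord Λ w) := by
          apply mul_le_mul_of_nonneg_left _ hc0.le
          exact mul_le_mul_of_nonneg_left h3 (Real.exp_pos _).le
      _ = c * Real.exp (-cmin) * sWord Λ w := by ring
  · positivity

end Aux

/-- **Theorem 7.1.**
(1) For every `r > 0`, `f̲^{U,Λ}(C,r) ≤ σ_abs(ζ_C^{U,Λ}(·;r))`;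
(2) `f̲^{U,Λ}(C) ≤ liminf_{r↘0} σ_abs(ζ_C^{U,Λ}(·;r))`. -/
theorem coarseLower_le_sigmaAbs
    {N : ℕ} (hN : 0 < N) {X : Type*} [MetricSpace X]
    (Λ : Seq N → ℝ) (hΛcont : Continuous Λ)
    (cmin cmax : ℝ) (hcmax : cmax < 0) (hccmin : cmin ≤ cmax)
    (hΛbdd : ∀ x, Λ x ∈ Set.Icc cmin cmax)
    (c : ℝ) (hc : 1 ≤ c) (hdist : BddDistortion Λ c)
    (U : ProbabilityMeasure (Seq N) → X) (hU : Continuous U)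
    (C : Set X) (hC : IsClosed C) :
    (∀ r : ℝ, 0 < r →
        coarseLowerR Λ U C r ≤ sigmaAbs (sWord Λ) (inTarget U (cball C r))) ∧
      coarseLower Λ U C ≤
        Filter.liminf (fun r : ℝ => sigmaAbs (sWord Λ) (inTarget U (cball C r)))
          (nhdsWithin 0 (Set.Ioi 0)) := by
  classical
  have main : ∀ r : ℝ, 0 < r →
      coarseLowerR Λ U C r ≤ sigmaAbs (sWord Λ) (inTarget U (cball C r)) := by
    intro r hr
    rw [sigmaAbs]
    apply le_sInf
    rintro _ ⟨t, ht, rfl⟩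
    simp only [Set.mem_setOf_eq] at ht
    set P := inTarget U (cball C r) with hP
    set S : ℝ := ∑' w : {w : Word N // w ≠ [] ∧ P w}, sWord Λ w.1 ^ t with hS
    set a : ℝ := Real.exp cmin / c with ha_def
    have hc0 : (0:ℝ) < c := lt_of_lt_of_le one_pos hc
    have ha : 0 < a := div_pos (Real.exp_pos _) hc0
    set K : ℝ := min (a ^ t) 1 with hK_def
    have hK : 0 < K := lt_min (Real.rpow_pos_of_pos ha t) one_pos
    -- counting bound
    have hcount : ∀ δ : ℝ, 0 < δ → Ncount Λ U C r δ ≠ 0 →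
        (Ncount Λ U C r δ : ℝ) * (K * δ ^ t) ≤ S := by
      intro δ hδ h0
      set A : Set (Word N) := {w | w ≠ [] ∧ sWord Λ w ≤ δ ∧ δ < sWord Λ w.dropLast ∧
        inTarget U (cball C r) w} with hA
      have hNc : Ncount Λ U C r δ = A.ncard := rfl
      have hAfin : A.Finite := by
        by_contra h
        exact h0 (by rw [hNc, Set.Infinite.ncard h])
      set B : Set {w : Word N // w ≠ [] ∧ P w} := Subtype.val ⁻¹' A with hB
      have hBfin : B.Finite := hAfin.preimage Subtype.val_injective.injOn
      have himg : Subtype.val '' B = A := by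
        rw [hB, Set.image_preimage_eq_inter_range, Subtype.range_coe_subtype]
        apply Set.inter_eq_self_of_subset_left
        intro w hw
        exact ⟨hw.1, hw.2.2.2⟩
      have hcard : A.ncard = B.ncard := by
        rw [← himg, Set.ncard_image_of_injective _ Subtype.val_injective]
      have hpt : ∀ i ∈ hBfin.toFinset, K * δ ^ t ≤ sWord Λ i.1 ^ t := by
        intro i hi
        rw [Set.Finite.mem_toFinset] at hi
        obtain ⟨hwne, hwle, hwgt, -⟩ := hi
        have hsw : 0 < sWord Λ i.1 := sWord_pos hN hΛbdd i.1
        have h4 : a * δ < sWord Λ i.1 := by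
          have h5 : sWord Λ i.1.dropLast ≤ c * Real.exp (-cmin) * sWord Λ i.1 :=
            sWord_dropLast_le hN hΛbdd hc hdist hwne
          have h6 : δ < c * Real.exp (-cmin) * sWord Λ i.1 := lt_of_lt_of_le hwgt h5
          have h7 : a * δ < a * (c * Real.exp (-cmin) * sWord Λ i.1) :=
            mul_lt_mul_of_pos_left h6 ha
          have h8 : a * (c * Real.exp (-cmin) * sWord Λ i.1) = sWord Λ i.1 := by
            rw [ha_def, Real.exp_neg]
            field_simp
          rw [h8] at h7; exact h7
        rcases le_or_gt 0 t with htpos | htneg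
        · calc K * δ ^ t ≤ a ^ t * δ ^ t :=
              mul_le_mul_of_nonneg_right (min_le_left _ _) (Real.rpow_nonneg hδ.le t)
            _ = (a * δ) ^ t := (Real.mul_rpow ha.le hδ.le).symm
            _ ≤ sWord Λ i.1 ^ t := Real.rpow_le_rpow (by positivity) h4.le htpos
        · calc K * δ ^ t ≤ 1 * δ ^ t :=
              mul_le_mul_of_nonneg_right (min_le_right _ _) (Real.rpow_pos_of_pos hδ t).le
            _ = δ ^ t := one_mul _
            _ ≤ sWord Λ i.1 ^ t := Real.rpow_le_rpow_of_nonpos hsw hwle htneg.le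
      have h1 : (B.ncard : ℝ) * (K * δ ^ t) ≤ ∑ i ∈ hBfin.toFinset, sWord Λ i.1 ^ t := by
        have := Finset.card_nsmul_le_sum hBfin.toFinset (fun i => sWord Λ i.1 ^ t)
          (K * δ ^ t) hpt
        rw [Set.ncard_eq_toFinset_card B hBfin]
        simpa [nsmul_eq_mul] using this
      have h2 : ∑ i ∈ hBfin.toFinset, sWord Λ i.1 ^ t ≤ S :=
        Summable.sum_le_tsum _ (fun i _ => Real.rpow_nonneg (sWord_pos hN hΛbdd i.1).le t) ht
      rw [hNc, hcard]
      exact h1.trans h2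
    -- epsilon step
    have hεstep : ∀ ε : ℝ, 0 < ε → coarseLowerR Λ U C r ≤ ((t + ε : ℝ) : EReal) := by
      intro ε hε
      apply Filter.liminf_le_of_frequently_le'
      apply Filter.Eventually.frequently
      set M : ℝ := max 1 (|Real.log S - Real.log K| / ε) with hM_def
      have hM1 : (1:ℝ) ≤ M := le_max_left _ _
      have hM : 0 < M := lt_of_lt_of_le one_pos hM1
      have hmem : Set.Ioo (0:ℝ) (Real.exp (-M)) ∈ 𝓝[>] (0:ℝ) :=
        Ioo_mem_nhdsGT_of_mem ⟨le_refl 0, Real.exp_pos _⟩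
      filter_upwards [hmem] with δ hδ
      rcases eq_or_ne (Ncount Λ U C r δ) 0 with h0 | h0
      · simp [ratioE, h0]
      · rw [ratioE, if_neg h0, EReal.coe_le_coe_iff]
        have hδ0 : 0 < δ := hδ.1
        have hb := hcount δ hδ0 h0
        have hm1 : (1:ℝ) ≤ (Ncount Λ U C r δ : ℝ) := by
          exact_mod_cast Nat.one_le_iff_ne_zero.2 h0
        have hKδ : 0 < K * δ ^ t := mul_pos hK (Real.rpow_pos_of_pos hδ0 t)
        have hSpos : 0 < S := lt_of_lt_of_le (by nlinarith) hb
        have hlogδ : Real.log δ < -M := by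
          have := Real.log_lt_log hδ0 hδ.2
          rwa [Real.log_exp] at this
        have hnlδ : M < -Real.log δ := by linarith
        have hnlδ0 : 0 < -Real.log δ := lt_trans hM hnlδ
        have hm_le : (Ncount Λ U C r δ : ℝ) ≤ S / (K * δ ^ t) := by
          rw [le_div_iff₀ hKδ]; exact hb
        have hlogm : Real.log (Ncount Λ U C r δ : ℝ) ≤
            Real.log S - Real.log K - t * Real.log δ := by
          have h9 : Real.log (Ncount Λ U C r δ : ℝ) ≤ Real.log (S / (K * δ ^ t)) :=
            Real.log_le_log (by linarith) hm_le
          rw [Real.log_div hSpos.ne' hKδ.ne', Real.log_mul hK.ne'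
            (Real.rpow_pos_of_pos hδ0 t).ne', Real.log_rpow hδ0] at h9
          linarith
        have hdiv : Real.log (Ncount Λ U C r δ : ℝ) / (-Real.log δ) ≤
            (Real.log S - Real.log K - t * Real.log δ) / (-Real.log δ) := by
          gcongr
        have heq : (Real.log S - Real.log K - t * Real.log δ) / (-Real.log δ) =
            (Real.log S - Real.log K) / (-Real.log δ) + t := by
          have hlδne : Real.log δ ≠ 0 := by nlinarith
          field_simp
          ring
        have htail : (Real.log S - Real.log K) / (-Real.log δ) ≤ ε := by
          have h10 : (Real.log S - Real.log K) / (-Real.log δ) ≤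
              |Real.log S - Real.log K| / (-Real.log δ) := by
            gcongr
            exact le_abs_self _
          have h11 : |Real.log S - Real.log K| / (-Real.log δ) ≤
              |Real.log S - Real.log K| / M := by
            gcongr
          have h12 : |Real.log S - Real.log K| / M ≤ ε := by
            rw [div_le_iff₀ hM]
            have : |Real.log S - Real.log K| / ε ≤ M := le_max_right _ _
            calc |Real.log S - Real.log K| = (|Real.log S - Real.log K| / ε) * ε := by
                  field_simp
              _ ≤ M * ε := by gcongr
              _ = ε * M := mul_comm _ _
          linarith
        calc Real.log (Ncount Λ U C r δ : ℝ) / (-Real.log δ)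
            ≤ (Real.log S - Real.log K) / (-Real.log δ) + t := by rw [← heq]; exact hdiv
          _ ≤ t + ε := by linarith
    -- conclude
    by_contra hlt
    push_neg at hlt
    obtain ⟨x, hx1, hx2⟩ := EReal.exists_between_coe_real hlt
    have hε : (0:ℝ) < x - t := by
      have := EReal.coe_lt_coe_iff.1 hx1
      linarith
    have := hεstep (x - t) hε
    rw [show t + (x - t) = x by ring] at this
    exact absurd this (not_le.2 hx2)
  refine ⟨main, ?_⟩
  refine Filter.le_liminf_of_le ?_ ?_
  · isBoundedDefault
  filter_upwards [self_mem_nhdsWithin] with r hr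
  exact le_trans (iInf₂_le r hr) (main r hr)


end Multifractal
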